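/- The group ⟨x_1,…,x_5 | x_1x_2 = x_3, x_2x_3 = x_4, x_3x_4 = x_5, x_4x_5 = x_1, x_5x_1 = x_2⟩ (the Fibonacci group F(5)) has order 11; equivalently, it is cyclic of order 11. -/

import Mathlib

/-- The relators of the Fibonacci group `F(n)`: `x_i x_{i+1} x_{i+2}⁻¹` for `i` mod `n`. -/
def fibonacciRels (n : ℕ) : Set (FreeGroup (ZMod n)) :=
  ⋃ i : ZMod n,
    {FreeGroup.of i * FreeGroup.of (i + 1) * (FreeGroup.of (i + 2))⁻¹}

/-- The Fibonacci group `F(n) = ⟨x_1,…,x_n ∣ x_i x_{i+1} = x_{i+2}⟩`. -/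
def FibonacciGroup (n : ℕ) : Type := PresentedGroup (fibonacciRels n)

instance (n : ℕ) : Group (FibonacciGroup n) :=
  inferInstanceAs (Group (PresentedGroup (fibonacciRels n)))

/-!
Write `a = x_i`, `b = x_{i+1}`. Eliminating the other three generators, the relations of `F(5)`
give `b a b² = a²` and `b a⁴ b = a`. The second says that `b a⁴` squares to `a⁵`, so `b` commutes
with `a⁵`, and then `(b a⁻¹)² = a⁻⁵`. As `b a⁻¹ = x_{i-1}`, this reads `x_{i-1}² = x_i⁻⁵`; so `x_i`
commutes with `x_{i-1}²` and (by the first step at `i - 1`) with `x_{i-1}⁵`, hence with `x_{i-1}`.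
Consecutive generators therefore commute, and the two relations collapse to `b = a⁴`, `a¹¹ = 1`:
`F(5)` is generated by `x_0` of order dividing `11`, and `x_i ↦ 4^i` onto `ℤ/11` shows the order is
exactly `11`.
-/

section Group

variable {G : Type*} [Group G] {a b c : G}

theorem commute_of_commute_sq_of_commute_pow_five (h2 : Commute a (c ^ 2))
    (h5 : Commute a (c ^ 5)) : Commute a c := by
  have hc : c = c ^ 5 * (c ^ 2)⁻¹ * (c ^ 2)⁻¹ := by group
  rw [hc]
  exact (h5.mul_right h2.inv_right).mul_right h2.inv_right

theorem commute_pow_five_of_mul_pow_four_mul_eq (h : b * a ^ 4 * b = a) :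
    Commute b (a ^ 5) := by
  have hsq : (b * a ^ 4) ^ 2 = a ^ 5 := by
    calc (b * a ^ 4) ^ 2 = b * a ^ 4 * b * a ^ 4 := by rw [sq]; group
      _ = a ^ 5 := by rw [h]; group
  have hu : Commute (b * a ^ 4) (a ^ 5) := hsq ▸ Commute.self_pow _ 2
  simpa using hu.mul_left (Commute.pow_pow_self a 4 5).inv_left

theorem sq_mul_inv_eq_of_mul_pow_four_mul_eq (h : b * a ^ 4 * b = a) :
    (b * a⁻¹) ^ 2 = (a ^ 5)⁻¹ := by
  have hb := (commute_pow_five_of_mul_pow_four_mul_eq h).inv_right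
  calc (b * a⁻¹) ^ 2 = b * a ^ 4 * ((a ^ 5)⁻¹ * b) * a⁻¹ := by rw [sq]; group
    _ = b * a ^ 4 * b * (a ^ 5)⁻¹ * a⁻¹ := by rw [← hb.eq]; group
    _ = (a ^ 5)⁻¹ := by rw [h]; group

theorem eq_pow_four_of_commute (hab : Commute a b) (h1 : b * a * b ^ 2 = a ^ 2)
    (h4 : b * a ^ 4 * b = a) : b = a ^ 4 := by
  have hcube : b ^ 3 = a := by
    calc b ^ 3 = a⁻¹ * (a * b * b ^ 2) := by group
      _ = a := by rw [hab.eq, h1]; group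
  have hsq : b ^ 2 = (a ^ 3)⁻¹ := by
    calc b ^ 2 = (a ^ 4)⁻¹ * (a ^ 4 * b * b) := by rw [sq]; group
      _ = (a ^ 3)⁻¹ := by rw [(hab.pow_left 4).eq, h4]; group
  calc b = b ^ 3 * (b ^ 2)⁻¹ := by group
    _ = a ^ 4 := by rw [hcube, hsq]; group

end Group

def IsFibonacci {G : Type*} [Mul G] {n : ℕ} (x : ZMod n → G) : Prop :=
  ∀ i, x i * x (i + 1) = x (i + 2)

namespace IsFibonacci

variable {G : Type*} [Group G]

theorem mul_eq {n : ℕ} {x : ZMod n → G} (hx : IsFibonacci x) {i j k : ZMod n}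
    (hj : i + 1 = j) (hk : i + 2 = k) : x i * x j = x k := by
  subst hj hk
  exact hx i

variable {x : ZMod 5 → G}

theorem succ_mul_mul_sq (hx : IsFibonacci x) (i : ZMod 5) :
    x (i + 1) * x i * x (i + 1) ^ 2 = x i ^ 2 := by
  have h3 : x (i + 1) * x (i + 2) = x (i + 3) := hx.mul_eq (by grind) (by grind)
  have h4 : x (i + 4) * x i = x (i + 1) := hx.mul_eq (by grind) (by grind)
  have h0 : x (i + 3) * x (i + 4) = x i := hx.mul_eq (by grind) (by grind)
  calc x (i + 1) * x i * x (i + 1) ^ 2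
        = x (i + 1) * (x i * x (i + 1)) * (x (i + 1) * (x i)⁻¹) * x i := by rw [sq]; group
    _ = x i ^ 2 := by rw [hx i, h3, ← eq_mul_inv_of_mul_eq h4, h0, sq]

theorem succ_mul_pow_four_mul (hx : IsFibonacci x) (i : ZMod 5) :
    x (i + 1) * x i ^ 4 * x (i + 1) = x i := by
  have h3 : x (i + 1) * x (i + 2) = x (i + 3) := hx.mul_eq (by grind) (by grind)
  have h4 : x (i + 2) * x (i + 3) = x (i + 4) := hx.mul_eq (by grind) (by grind)
  have h0 : x (i + 4) * x i = x (i + 1) := hx.mul_eq (by grind) (by grind)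
  set a := x i
  set b := x (i + 1)
  have hwrap : a * b * (b * (a * b)) * a = b := by rw [hx i, h3, h4, h0]
  have hE1 : b * a * b ^ 2 = a ^ 2 := hx.succ_mul_mul_sq i
  have hE : a ^ 3 * b * a = b ^ 2 := by
    calc a ^ 3 * b * a = b * (b⁻¹ * a ^ 2) * (a * b * a) := by group
      _ = b * (b⁻¹ * (b * a * b ^ 2)) * (a * b * a) := by rw [hE1]
      _ = b * (a * b * (b * (a * b)) * a) := by rw [sq]; group
      _ = b ^ 2 := by rw [hwrap, sq]
  calc b * a ^ 4 * b = b * a * (a ^ 3 * b * a) * a⁻¹ := by group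
    _ = b * a * b ^ 2 * a⁻¹ := by rw [hE]
    _ = a := by rw [hE1, sq]; group

theorem sq_eq_inv_pow_five (hx : IsFibonacci x) (i : ZMod 5) :
    x i ^ 2 = (x (i + 1) ^ 5)⁻¹ := by
  have h := sq_mul_inv_eq_of_mul_pow_four_mul_eq (hx.succ_mul_pow_four_mul (i + 1))
  rwa [← eq_mul_inv_of_mul_eq (hx.mul_eq rfl (by grind))] at h

theorem commute_succ (hx : IsFibonacci x) (i : ZMod 5) : Commute (x i) (x (i + 1)) := by
  refine (commute_of_commute_sq_of_commute_pow_five ?_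
    (commute_pow_five_of_mul_pow_four_mul_eq (hx.succ_mul_pow_four_mul i))).symm
  rw [hx.sq_eq_inv_pow_five]
  exact (Commute.self_pow _ 5).inv_right

theorem succ_eq_pow_four (hx : IsFibonacci x) (i : ZMod 5) : x (i + 1) = x i ^ 4 :=
  eq_pow_four_of_commute (hx.commute_succ i) (hx.succ_mul_mul_sq i) (hx.succ_mul_pow_four_mul i)

theorem pow_eleven (hx : IsFibonacci x) (i : ZMod 5) : x i ^ 11 = 1 := by
  have h : x i * x (i + 1) = x (i + 1 + 1) := hx.mul_eq rfl (by grind)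
  rw [hx.succ_eq_pow_four (i + 1), hx.succ_eq_pow_four i] at h
  calc x i ^ 11 = (x i ^ 4) ^ 4 * (x i * x i ^ 4)⁻¹ := by group
    _ = 1 := by rw [h]; group

theorem mem_zpowers (hx : IsFibonacci x) (i : ZMod 5) : x i ∈ Subgroup.zpowers (x 0) := by
  rw [← ZMod.natCast_zmod_val i]
  induction i.val with
  | zero => exact Subgroup.mem_zpowers _
  | succ n ih =>
    rw [Nat.cast_succ, hx.succ_eq_pow_four]
    exact pow_mem ih 4

end IsFibonacci

namespace FibonacciGroup

variable {n : ℕ}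

def of (i : ZMod n) : FibonacciGroup n := PresentedGroup.of i

theorem isFibonacci_of : IsFibonacci (of : ZMod n → FibonacciGroup n) := by
  intro i
  have h := PresentedGroup.one_of_mem (Set.mem_iUnion.2 ⟨i, rfl⟩ :
    FreeGroup.of i * FreeGroup.of (i + 1) * (FreeGroup.of (i + 2))⁻¹ ∈ fibonacciRels n)
  rw [map_mul, map_mul, map_inv] at h
  exact mul_inv_eq_one.1 h

variable {G : Type*} [Group G] {y : ZMod n → G}

def lift (hy : IsFibonacci y) : FibonacciGroup n →* G :=
  PresentedGroup.toGroup (f := y) <| by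
    simp only [fibonacciRels, Set.mem_iUnion, Set.mem_singleton_iff, forall_exists_index]
    rintro _ i rfl
    simpa using mul_inv_eq_one.2 (hy i)

theorem lift_of (hy : IsFibonacci y) (i : ZMod n) : lift hy (of i) = y i :=
  PresentedGroup.toGroup.of _

end FibonacciGroup

/-- `4` is a root of `t² = t + 1` in `ZMod 11`, and `4 ^ 5 = 1`. -/
def powFourModEleven (i : ZMod 5) : Multiplicative (ZMod 11) :=
  Multiplicative.ofAdd (4 ^ i.val)

theorem isFibonacci_powFourModEleven : IsFibonacci powFourModEleven := by
  unfold IsFibonacci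
  decide

theorem powFourModEleven_ne_one : ∀ i, powFourModEleven i ≠ 1 := by
  decide

theorem FibonacciGroup.orderOf_of (i : ZMod 5) : orderOf (of i) = 11 := by
  have : Fact (Nat.Prime 11) := ⟨by norm_num⟩
  refine orderOf_eq_prime (isFibonacci_of.pow_eleven i) fun h => ?_
  have h' := congrArg (lift isFibonacci_powFourModEleven) h
  rw [lift_of, map_one] at h'
  exact powFourModEleven_ne_one i h'

/-- Conway's Fibonacci group `F(5)` is cyclic of order 11. -/
theorem fibonacciGroup_five : Nat.card (FibonacciGroup 5) = 11 ∧ IsCyclic (FibonacciGroup 5) := by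
  have hgen : ∀ g, g ∈ Subgroup.zpowers (FibonacciGroup.of (0 : ZMod 5)) :=
    PresentedGroup.generated_by _ _ FibonacciGroup.isFibonacci_of.mem_zpowers
  refine ⟨?_, isCyclic_iff_exists_zpowers_eq_top.2 ⟨_, (Subgroup.eq_top_iff' _).2 hgen⟩⟩
  rw [← orderOf_eq_card_of_forall_mem_zpowers hgen, FibonacciGroup.orderOf_of]
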